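/- Let Σ̂ be an n×n real symmetric positive definite matrix and suppose 0 < δ < δ_max(Σ̂) := log det( dd(Σ̂⁻¹)·Σ̂ ). Then: (i) for every λ̄ > 0, the matrix Σ̂⁻¹ + λ̄⁻¹(−λ̄·ofd(Σ̂⁻¹)) = dd(Σ̂⁻¹) is positive definite and J̃(λ̄, 0, −λ̄·ofd(Σ̂⁻¹)) = −λ̄(δ_max(Σ̂) − δ) < 0; (ii) there exists λ̄ > 0 such that the triple (λ̄, 0, −λ̄·ofd(Σ̂⁻¹)) belongs to C₂; consequently inf_{(λ,Γ,Θ)∈C₂} J̃(λ,Γ,Θ) < 0. -/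

import Mathlib

/-- `dd M`: the diagonal matrix with the same diagonal as `M`. -/
def dd {n : ℕ} (M : Matrix (Fin n) (Fin n) ℝ) : Matrix (Fin n) (Fin n) ℝ :=
  Matrix.diagonal fun i => M i i

/-- `ofd M := M − dd M`: `M` with its diagonal entries set to zero. -/
def ofd {n : ℕ} (M : Matrix (Fin n) (Fin n) ℝ) : Matrix (Fin n) (Fin n) ℝ :=
  M - dd M

/-- The dual objective `J̃(λ,Γ,Θ) := λ(−log det(Ŝ⁻¹ + λ⁻¹(ofd(Θ) − Γ)) − log det Ŝ + δ)`. -/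
noncomputable def Jt {n : ℕ} (S : Matrix (Fin n) (Fin n) ℝ) (δ : ℝ)
    (l : ℝ) (Γ Θ : Matrix (Fin n) (Fin n) ℝ) : ℝ :=
  l * (-Real.log ((S⁻¹ + l⁻¹ • (ofd Θ - Γ)).det) - Real.log S.det + δ)

/-- The constraint set `C₂`. -/
def C2 {n : ℕ} (S : Matrix (Fin n) (Fin n) ℝ)
    (l : ℝ) (Γ Θ : Matrix (Fin n) (Fin n) ℝ) : Prop :=
  0 < l ∧ Γ.IsDiag ∧ Γ.PosSemidef ∧ Θ.IsSymm ∧ (∀ i, Θ i i = 0) ∧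
    (1 + Γ - Θ).PosSemidef ∧ (S⁻¹ + l⁻¹ • (Θ - Γ)).PosDef

/-!
The witness `Θ = -λ·ofd(Ŝ⁻¹)` cancels the off-diagonal part of `Ŝ⁻¹`, so the matrix inside
the log-determinant is `dd(Ŝ⁻¹)` for every `λ > 0`, and `J̃ = -λ (log det(dd(Ŝ⁻¹)) + log det Ŝ - δ)
= -λ (δ_max - δ) < 0`. The only nontrivial feasibility condition is `I - Θ ⪰ 0`, and
`I + λ·ofd(Ŝ⁻¹) = (I - λ·dd(Ŝ⁻¹)) + λ·Ŝ⁻¹` is a sum of positive semidefinite matrices as soon as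
`λ·(Ŝ⁻¹)ᵢᵢ ≤ 1` for all `i`.
-/

open Matrix

section ofd

variable {n : ℕ}

@[simp]
lemma ofd_apply_self (M : Matrix (Fin n) (Fin n) ℝ) (i : Fin n) : ofd M i i = 0 := by
  simp [ofd, dd]

lemma ofd_eq_self_of_diag_eq_zero {M : Matrix (Fin n) (Fin n) ℝ} (h : ∀ i, M i i = 0) :
    ofd M = M := by
  simp [ofd, dd, h]

lemma ofd_neg_smul_ofd (M : Matrix (Fin n) (Fin n) ℝ) (l : ℝ) :
    ofd (-(l • ofd M)) = -(l • ofd M) :=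
  ofd_eq_self_of_diag_eq_zero fun i => by simp

lemma Matrix.IsSymm.ofd {M : Matrix (Fin n) (Fin n) ℝ} (h : M.IsSymm) : (ofd M).IsSymm :=
  h.sub (isSymm_diagonal _)

lemma Matrix.PosDef.dd {M : Matrix (Fin n) (Fin n) ℝ} (h : M.PosDef) : (dd M).PosDef :=
  PosDef.diagonal fun _ => h.diag_pos

lemma add_inv_smul_neg_smul_ofd (M : Matrix (Fin n) (Fin n) ℝ) {l : ℝ} (hl : l ≠ 0) :
    M + l⁻¹ • (-(l • ofd M) - 0) = dd M := by
  rw [sub_zero, smul_neg, smul_smul, inv_mul_cancel₀ hl, one_smul, ofd]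
  abel

lemma one_add_smul_ofd_eq (M : Matrix (Fin n) (Fin n) ℝ) (l : ℝ) :
    1 + l • ofd M = diagonal (fun i => 1 - l * M i i) + l • M := by
  ext i j
  rcases eq_or_ne i j with rfl | hij
  · simp [ofd, dd]
  · simp [ofd, dd, one_apply_ne hij, diagonal_apply_ne _ hij]

lemma Matrix.PosSemidef.one_add_smul_ofd {M : Matrix (Fin n) (Fin n) ℝ} (hM : M.PosSemidef) {l : ℝ}
    (hl : 0 ≤ l) (hlM : ∀ i, l * M i i ≤ 1) : (1 + l • ofd M).PosSemidef := by
  rw [one_add_smul_ofd_eq]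
  exact (posSemidef_diagonal_iff.mpr fun i => sub_nonneg.mpr (hlM i)).add (hM.smul hl)

end ofd

lemma exists_pos_mul_le_one {ι : Type*} [Fintype ι] (f : ι → ℝ) :
    ∃ l : ℝ, 0 < l ∧ ∀ i, l * f i ≤ 1 := by
  set s := ∑ i, |f i|
  have hs : 0 < 1 + s := by positivity
  refine ⟨(1 + s)⁻¹, inv_pos.mpr hs, fun i => ?_⟩
  rw [inv_mul_le_iff₀ hs]
  have : |f i| ≤ s := Finset.single_le_sum (fun j _ => abs_nonneg (f j)) (Finset.mem_univ i)
  linarith [le_abs_self (f i)]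

section witness

variable {n : ℕ} {S : Matrix (Fin n) (Fin n) ℝ} {l : ℝ}

lemma Jt_neg_smul_ofd_inv (hS : S.PosDef) (δ : ℝ) (hl : l ≠ 0) :
    Jt S δ l 0 (-(l • ofd S⁻¹)) = -(l * (Real.log ((dd S⁻¹ * S).det) - δ)) := by
  rw [Jt, ofd_neg_smul_ofd, add_inv_smul_neg_smul_ofd _ hl, det_mul,
    Real.log_mul hS.inv.dd.det_pos.ne' hS.det_pos.ne']
  ring

lemma C2_neg_smul_ofd_inv (hS : S.PosDef) (hl : 0 < l) (hlS : ∀ i, l * S⁻¹ i i ≤ 1) :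
    C2 S l 0 (-(l • ofd S⁻¹)) := by
  refine ⟨hl, isDiag_zero, .zero, ((isHermitian_iff_isSymm.mp hS.inv.isHermitian).ofd.smul l).neg, fun i => by simp,
    ?_, ?_⟩
  · rw [add_zero, sub_neg_eq_add]
    exact hS.inv.posSemidef.one_add_smul_ofd hl.le hlS
  · rw [add_inv_smul_neg_smul_ofd _ hl.ne']
    exact hS.inv.dd

end witness

theorem stmt7 {n : ℕ} (S : Matrix (Fin n) (Fin n) ℝ) (hS : S.PosDef)
    (δ : ℝ) (hδmax : δ < Real.log ((dd S⁻¹ * S).det)) :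
    (∀ l : ℝ, 0 < l →
      S⁻¹ + l⁻¹ • (ofd (-(l • ofd S⁻¹)) - 0) = dd S⁻¹ ∧
      (dd S⁻¹).PosDef ∧
      Jt S δ l 0 (-(l • ofd S⁻¹)) = -(l * (Real.log ((dd S⁻¹ * S).det) - δ)) ∧
      -(l * (Real.log ((dd S⁻¹ * S).det) - δ)) < 0) ∧
    (∃ l : ℝ, 0 < l ∧ C2 S l 0 (-(l • ofd S⁻¹))) ∧
    (∃ l Γ Θ, C2 S l Γ Θ ∧ Jt S δ l Γ Θ < 0) := by
  have hneg : ∀ l : ℝ, 0 < l → -(l * (Real.log ((dd S⁻¹ * S).det) - δ)) < 0 :=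
    fun l hl => neg_neg_of_pos (mul_pos hl (sub_pos.mpr hδmax))
  obtain ⟨l, hl, hlS⟩ := exists_pos_mul_le_one fun i => S⁻¹ i i
  have hC2 := C2_neg_smul_ofd_inv hS hl hlS
  refine ⟨fun l hl => ⟨?_, hS.inv.dd, Jt_neg_smul_ofd_inv hS δ hl.ne', hneg l hl⟩,
    ⟨l, hl, hC2⟩, l, 0, _, hC2, ?_⟩
  · rw [ofd_neg_smul_ofd, add_inv_smul_neg_smul_ofd _ hl.ne']
  · rw [Jt_neg_smul_ofd_inv hS δ hl.ne']
    exact hneg l hl
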